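/- Let X be a dual Banach space, X₀, Y, Z Banach spaces with X₀ ⊆ X weak*-dense in X, and let φ : X → Y** be a weak*-continuous surjective isometry with φ(X₀) = Y (where Y is viewed inside Y** via the canonical embedding). Then every bounded linear map u : X₀ → Z* extends to a weak*-continuous bounded linear map ũ : X → Z* with ũ|_{X₀} = u and ‖ũ‖ = ‖u‖. -/

import Mathlib

set_option maxHeartbeats 1000000


open NormedSpace

/-- Let `X = W*` be a dual Banach space, `X₀ ⊆ X` a weak*-dense subspace, and
`φ : X → Y**` a weak*-continuous surjective isometry with `φ(X₀) = Y` (with `Y ⊆ Y**` via the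
canonical embedding). Then every bounded linear map `u : X₀ → Z*` extends to a weak*-continuous
bounded linear map `ũ : X → Z*` with `ũ|_{X₀} = u` and `‖ũ‖ = ‖u‖`. -/
theorem weakstar_extension_lemma
    {W Y Z : Type*}
    [NormedAddCommGroup W] [NormedSpace ℂ W] [CompleteSpace W]
    [NormedAddCommGroup Y] [NormedSpace ℂ Y] [CompleteSpace Y]
    [NormedAddCommGroup Z] [NormedSpace ℂ Z] [CompleteSpace Z]
    (X₀ : @Submodule ℂ (StrongDual ℂ W) _ NormedAddCommGroup.toAddCommGroup.toAddCommMonoid NormedSpace.toModule)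
    (hdense : Dense (StrongDual.toWeakDual '' (X₀ : Set (StrongDual ℂ W))))
    (φ : StrongDual ℂ W →L[ℂ] StrongDual ℂ (StrongDual ℂ Y))
    (hiso : Isometry φ)
    (hsurj : Function.Surjective φ)
    (hwstar : Continuous fun x : WeakDual ℂ W =>
      StrongDual.toWeakDual (φ (WeakDual.toStrongDual x)))
    (hφX₀ : φ '' (X₀ : Set (StrongDual ℂ W)) = Set.range (inclusionInDoubleDual ℂ Y))
    (u : X₀ →L[ℂ] StrongDual ℂ Z) :
    ∃ v : StrongDual ℂ W →L[ℂ] StrongDual ℂ Z,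
      (Continuous fun x : WeakDual ℂ W =>
        StrongDual.toWeakDual (v (WeakDual.toStrongDual x))) ∧
      (∀ x : X₀, v (x : StrongDual ℂ W) = u x) ∧
      ‖v‖ = ‖u‖ := by
  -- φ as a linear isometry equivalence
  have nφ : ∀ x, ‖φ x‖ = ‖x‖ := fun x => by
    simpa using (Isometry.norm_map_of_map_zero (f := ⇑φ) hiso (map_zero φ)) x
  set φli : StrongDual ℂ W →ₗᵢ[ℂ] StrongDual ℂ (StrongDual ℂ Y) := ⟨φ.toLinearMap, nφ⟩ with hφli
  set e : StrongDual ℂ W ≃ₗᵢ[ℂ] StrongDual ℂ (StrongDual ℂ Y) :=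
    LinearIsometryEquiv.ofSurjective φli hsurj with he
  have he_apply : ∀ x, e x = φ x := fun x => rfl
  set J : Y →L[ℂ] StrongDual ℂ (StrongDual ℂ Y) := inclusionInDoubleDual ℂ Y with hJ
  -- the inverse map ψ₀ : Y → X (landing in X₀)
  set ψ₀ : Y →L[ℂ] StrongDual ℂ W := ((e.symm.toContinuousLinearEquiv : StrongDual ℂ (StrongDual ℂ Y) →L[ℂ] StrongDual ℂ W).comp J) with hψ₀
  have hφψ₀ : ∀ y, φ (ψ₀ y) = J y := fun y => by
    show φ (e.symm (J y)) = J y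
    rw [← he_apply]
    exact e.apply_symm_apply (J y)
  have hmem : ∀ y, ψ₀ y ∈ X₀ := by
    intro y
    have hy : J y ∈ φ '' (X₀ : Set (StrongDual ℂ W)) := by
      rw [hφX₀]; exact ⟨y, rfl⟩
    obtain ⟨x, hx, hxy⟩ := hy
    have : ψ₀ y = x := hiso.injective (by rw [hφψ₀ y, hxy])
    rwa [this]
  have hψ₀norm : ∀ y, ‖ψ₀ y‖ = ‖y‖ := fun y => by
    rw [← nφ (ψ₀ y), hφψ₀ y]
    exact (inclusionInDoubleDualLi ℂ (E := Y)).norm_map y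
  set ψ : Y →L[ℂ] X₀ := ψ₀.codRestrict X₀ hmem with hψ
  -- g : Z → Y*, g z y = u (ψ y) z
  set g : Z →L[ℂ] StrongDual ℂ Y := (u.comp ψ).flip with hg
  have hg_apply : ∀ z y, g z y = u (ψ y) z := fun z y => rfl
  have hg_norm : ∀ z, ‖g z‖ ≤ ‖u‖ * ‖z‖ := by
    intro z
    refine ContinuousLinearMap.opNorm_le_bound _ (by positivity) fun y => ?_
    rw [hg_apply]
    calc ‖u (ψ y) z‖ ≤ ‖u (ψ y)‖ * ‖z‖ := (u (ψ y)).le_opNorm z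
      _ ≤ ‖u‖ * ‖(ψ y : StrongDual ℂ W)‖ * ‖z‖ := by
          gcongr
          exact u.le_opNorm (ψ y)
      _ = ‖u‖ * ‖z‖ * ‖y‖ := by
          have : ‖(ψ y : StrongDual ℂ W)‖ = ‖y‖ := hψ₀norm y
          rw [this]; ring
  -- A : Y** → Z*, precomposition with g
  set A : StrongDual ℂ (StrongDual ℂ Y) →L[ℂ] StrongDual ℂ Z :=
    (ContinuousLinearMap.compL ℂ Z (StrongDual ℂ Y) ℂ).flip g with hA
  have hA_apply : ∀ f z, A f z = f (g z) := fun f z => rfl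
  have hext : ∀ x : X₀, (A.comp φ) (x : StrongDual ℂ W) = u x := by
    intro x
    obtain ⟨y, hy⟩ : ∃ y, J y = φ x := by
      have : φ (x : StrongDual ℂ W) ∈ Set.range (inclusionInDoubleDual ℂ Y) := by
        rw [← hφX₀]; exact ⟨x, x.2, rfl⟩
      obtain ⟨y, hy⟩ := this
      exact ⟨y, hy⟩
    have hψy : ψ₀ y = (x : StrongDual ℂ W) := hiso.injective (by rw [hφψ₀ y, hy])
    ext z
    have h1 : (A.comp φ) (x : StrongDual ℂ W) z = (φ (x : StrongDual ℂ W)) (g z) := rfl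
    rw [h1, ← hy]
    have h2 : J y (g z) = g z y := rfl
    rw [h2, hg_apply]
    have hψyx : ψ y = x := Subtype.ext hψy
    rw [hψyx]
  refine ⟨A.comp φ, ?_, hext, ?_⟩
  · -- weak*-continuity
    apply WeakDual.continuous_of_continuous_eval
    intro z
    have : ∀ x : WeakDual ℂ W,
        (StrongDual.toWeakDual ((A.comp φ) (WeakDual.toStrongDual x))) z
          = (StrongDual.toWeakDual (φ (WeakDual.toStrongDual x))) (g z) := fun x => rfl
    simp only [this]
    exact (WeakDual.eval_continuous (g z)).comp hwstar
  · -- norm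
    apply le_antisymm
    · refine ContinuousLinearMap.opNorm_le_bound _ (norm_nonneg u) fun x => ?_
      refine ContinuousLinearMap.opNorm_le_bound _ (by positivity) fun z => ?_
      have h1 : (A.comp φ) x z = (φ x) (g z) := rfl
      rw [h1]
      calc ‖φ x (g z)‖ ≤ ‖φ x‖ * ‖g z‖ := (φ x).le_opNorm _
        _ ≤ ‖x‖ * (‖u‖ * ‖z‖) := by rw [nφ]; gcongr; exact hg_norm z
        _ = ‖u‖ * ‖x‖ * ‖z‖ := by ring
    · refine ContinuousLinearMap.opNorm_le_bound _ (by positivity) fun x => ?_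
      rw [← hext x]
      exact (A.comp φ).le_opNorm (x : StrongDual ℂ W)
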